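/- The degenerate Bell numbers satisfy the recurrence φ_{n+1,λ} = ∑_{k=0}^{n} C(n,k) (1-λ)_{n-k,λ} φ_{k,λ} for all n ≥ 0. -/

import Mathlib

open Finset

/-- Generalized falling factorial `(x)_{n,lam} = x(x-lam)...(x-(n-1)lam)`. -/
noncomputable def dfall (lam x : ℝ) (n : ℕ) : ℝ := ∏ i ∈ Finset.range n, (x - i * lam)

/-- Generalized rising factorial `⟨x⟩_{n,lam} = x(x+lam)...(x+(n-1)lam)`. -/
noncomputable def drise (lam x : ℝ) (n : ℕ) : ℝ := ∏ i ∈ Finset.range n, (x + i * lam)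

lemma dfall_zero (lam x : ℝ) : dfall lam x 0 = 1 := by simp [dfall]

lemma dfall_succ (lam x : ℝ) (n : ℕ) :
    dfall lam x (n + 1) = dfall lam x n * (x - n * lam) := by
  simp [dfall, Finset.prod_range_succ]

lemma dfall_succ' (lam x : ℝ) (n : ℕ) :
    dfall lam x (n + 1) = x * dfall lam (x - lam) n := by
  rw [dfall, Finset.prod_range_succ']
  simp only [Nat.cast_zero, zero_mul, sub_zero, dfall]
  rw [mul_comm]
  congr 1
  refine Finset.prod_congr rfl fun i _ => ?_
  push_cast; ring

lemma dfall_one_nat_eq_zero {m j : ℕ} (h : j < m) : dfall 1 (j : ℝ) m = 0 := by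
  refine Finset.prod_eq_zero (Finset.mem_range.mpr h) ?_
  simp

lemma dfall_one_nat_self (m : ℕ) : dfall 1 (m : ℝ) m = (m.factorial : ℝ) := by
  induction m with
  | zero => simp [dfall]
  | succ m ih =>
    rw [dfall_succ']
    have h0 : ((m + 1 : ℕ) : ℝ) - 1 = (m : ℝ) := by push_cast; ring
    rw [h0, ih, Nat.factorial_succ]
    push_cast
    ring

lemma dfall_uniq (N : ℕ) (c : ℕ → ℝ)
    (h : ∀ x : ℝ, ∑ m ∈ Finset.range N, c m * dfall 1 x m = 0) :
    ∀ m, m < N → c m = 0 := by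
  intro m
  induction m using Nat.strong_induction_on with
  | _ m ih =>
    intro hm
    have hx := h (m : ℝ)
    rw [← Finset.sum_range_add_sum_Ico _ (Nat.succ_le_of_lt hm)] at hx
    have h2 : ∑ j ∈ Finset.Ico (m + 1) N, c j * dfall 1 (m : ℝ) j = 0 := by
      refine Finset.sum_eq_zero fun j hj => ?_
      rw [dfall_one_nat_eq_zero (Finset.mem_Ico.mp hj).1, mul_zero]
    rw [h2, add_zero, Finset.sum_range_succ] at hx
    have h1 : ∑ j ∈ Finset.range m, c j * dfall 1 (m : ℝ) j = 0 := by
      refine Finset.sum_eq_zero fun j hj => ?_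
      rw [ih j (Finset.mem_range.mp hj) (lt_trans (Finset.mem_range.mp hj) hm), zero_mul]
    rw [h1, zero_add, dfall_one_nat_self] at hx
    have : (m.factorial : ℝ) ≠ 0 := Nat.cast_ne_zero.mpr m.factorial_ne_zero
    exact (mul_eq_zero.mp hx).resolve_right this

lemma dfall_add (lam a b : ℝ) (n : ℕ) :
    dfall lam (a + b) n =
      ∑ k ∈ Finset.range (n + 1),
        (n.choose k : ℝ) * (dfall lam a k * dfall lam b (n - k)) := by
  induction n with
  | zero => simp [dfall]
  | succ n ih =>
    rw [dfall_succ, ih, Finset.sum_mul]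
    have key : ∀ k ∈ Finset.range (n + 1),
        (n.choose k : ℝ) * (dfall lam a k * dfall lam b (n - k)) * (a + b - n * lam)
          = (n.choose k : ℝ) * (dfall lam a (k + 1) * dfall lam b (n - k))
            + (n.choose k : ℝ) * (dfall lam a k * dfall lam b (n - k + 1)) := by
      intro k hk
      have hk' : k ≤ n := Nat.lt_succ_iff.mp (Finset.mem_range.mp hk)
      have h1 : ((n - k : ℕ) : ℝ) = (n : ℝ) - k := by
        rw [Nat.cast_sub hk']
      rw [dfall_succ, dfall_succ, h1]
      ring
    rw [Finset.sum_congr rfl key, Finset.sum_add_distrib]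
    have e2 : (∑ k ∈ Finset.range (n + 1),
        (n.choose k : ℝ) * (dfall lam a k * dfall lam b (n - k + 1)))
        = (∑ k ∈ Finset.range (n + 1),
            (n.choose (k + 1) : ℝ) * (dfall lam a (k + 1) * dfall lam b (n - k)))
          + dfall lam b (n + 1) := by
      rw [Finset.sum_range_succ' (fun k => (n.choose k : ℝ) * (dfall lam a k * dfall lam b (n - k + 1)))]
      congr 1
      · rw [Finset.sum_range_succ]
        have hz : (n.choose (n + 1) : ℝ) = 0 := by
          simp [Nat.choose_eq_zero_of_lt]
        rw [hz, zero_mul, add_zero]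
        refine Finset.sum_congr rfl fun k hk => ?_
        have hk' : k < n := Finset.mem_range.mp hk
        have : n - (k + 1) + 1 = n - k := by omega
        rw [this]
      · simp [dfall]
    rw [e2, ← add_assoc, ← Finset.sum_add_distrib]
    rw [Finset.sum_range_succ' (fun k => ((n+1).choose k : ℝ) * (dfall lam a k * dfall lam b (n + 1 - k)))]
    congr 1
    · refine Finset.sum_congr rfl fun k hk => ?_
      rw [← add_mul]
      have : ((n.choose k : ℝ) + (n.choose (k + 1) : ℝ)) = ((n + 1).choose (k + 1) : ℝ) := by
        rw [← Nat.cast_add, Nat.choose_succ_succ']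
      rw [this]
      have : n + 1 - (k + 1) = n - k := by omega
      rw [this]
    · simp [dfall_zero]

theorem stmt8 (lam : ℝ) (S : ℕ → ℕ → ℝ)
    (hS : ∀ (n : ℕ) (x : ℝ), dfall lam x n = ∑ k ∈ Finset.range (n + 1), S n k * dfall 1 x k)
    (phi : ℕ → ℝ)
    (hphi : ∀ n : ℕ, phi n = ∑ k ∈ Finset.range (n + 1), S n k) (n : ℕ) :
    phi (n + 1) = ∑ k ∈ Finset.range (n + 1),
      (n.choose k : ℝ) * dfall lam (1 - lam) (n - k) * phi k := by
  set c : ℕ → ℝ := fun m => match m with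
    | 0 => 0
    | j + 1 => ∑ k ∈ Finset.range (n + 1),
        (if j ≤ k then (n.choose k : ℝ) * dfall lam (1 - lam) (n - k) * S k j else 0)
    with hc
  -- Key polynomial identity
  have main : ∀ x : ℝ, ∑ m ∈ Finset.range (n + 2), (S (n + 1) m - c m) * dfall 1 x m = 0 := by
    intro x
    have h1 : dfall lam x (n + 1) = ∑ m ∈ Finset.range (n + 2), S (n + 1) m * dfall 1 x m :=
      hS (n + 1) x
    have h2 : dfall lam x (n + 1) = ∑ m ∈ Finset.range (n + 2), c m * dfall 1 x m := by
      rw [dfall_succ']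
      have hxl : x - lam = (x - 1) + (1 - lam) := by ring
      rw [hxl, dfall_add, Finset.mul_sum]
      have step : ∀ k ∈ Finset.range (n + 1),
          x * ((n.choose k : ℝ) * (dfall lam (x - 1) k * dfall lam (1 - lam) (n - k)))
            = ∑ j ∈ Finset.range (n + 1),
                (if j ≤ k then (n.choose k : ℝ) * dfall lam (1 - lam) (n - k) * S k j else 0)
                  * dfall 1 x (j + 1) := by
        intro k hk
        have hk' : k ≤ n := Nat.lt_succ_iff.mp (Finset.mem_range.mp hk)
        rw [hS k (x - 1), Finset.sum_mul, Finset.mul_sum, Finset.mul_sum]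
        rw [← Finset.sum_subset (Finset.range_subset_range.mpr (by omega : k + 1 ≤ n + 1))
          (fun j _ hj => by
            rw [if_neg (by simp only [Finset.mem_range] at hj; omega), zero_mul])]
        refine Finset.sum_congr rfl fun j hj => ?_
        rw [if_pos (Nat.lt_succ_iff.mp (Finset.mem_range.mp hj)), dfall_succ' 1 x j]
        ring
      rw [Finset.sum_congr rfl step, Finset.sum_comm]
      rw [Finset.sum_range_succ' (fun m => c m * dfall 1 x m)]
      have hc0 : c 0 * dfall 1 x 0 = 0 := by simp [hc]
      rw [hc0, add_zero]
      refine Finset.sum_congr rfl fun j _ => ?_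
      simp only [hc]
      rw [Finset.sum_mul]
    have := h1.symm.trans h2
    calc ∑ m ∈ Finset.range (n + 2), (S (n + 1) m - c m) * dfall 1 x m
        = (∑ m ∈ Finset.range (n + 2), S (n + 1) m * dfall 1 x m)
          - ∑ m ∈ Finset.range (n + 2), c m * dfall 1 x m := by
          rw [← Finset.sum_sub_distrib]; exact Finset.sum_congr rfl fun m _ => by ring
      _ = 0 := by rw [← h1, ← h2, sub_self]
  have hSc : ∀ m, m < n + 2 → S (n + 1) m = c m := by
    intro m hm
    have := dfall_uniq (n + 2) _ main m hm
    linarith [this]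
  -- Now sum up
  rw [hphi]
  rw [Finset.sum_congr rfl fun m hm => hSc m (Finset.mem_range.mp hm)]
  rw [Finset.sum_range_succ' c]
  have hc0 : c 0 = 0 := rfl
  rw [hc0, add_zero]
  simp only [hc]
  rw [Finset.sum_comm]
  refine Finset.sum_congr rfl fun k hk => ?_
  have hk' : k ≤ n := Nat.lt_succ_iff.mp (Finset.mem_range.mp hk)
  rw [hphi k, Finset.mul_sum]
  rw [← Finset.sum_subset (Finset.range_subset_range.mpr (by omega : k + 1 ≤ n + 1))
    (fun j _ hj => by rw [if_neg (by simp only [Finset.mem_range] at hj; omega)])]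
  refine Finset.sum_congr rfl fun j hj => ?_
  rw [if_pos (Nat.lt_succ_iff.mp (Finset.mem_range.mp hj))]
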